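/- Let V be a finite-dimensional real vector space and L ⊆ V the ℤ-span of an ℝ-basis of V. (a) If 𝒞 is a cofan in L, then 𝒞_ℝ = {conv(σ) : σ ∈ 𝒞} is a cofan of real cones in V: if ν is a face of μ ∈ 𝒞_ℝ then μ − ν ∈ 𝒞_ℝ, and for μ, μ′ ∈ 𝒞_ℝ the Minkowski sum μ + μ′ equals μ − ν for some face ν of μ. (b) If Δ is a fan of real cones in V, then the set of all faces of the integral cones τ ∩ L for τ ∈ Δ is a fan in L. -/

import Mathlib

/-!
Part (a) rests on one arithmetic fact: if a nonnegative real combination of lattice vectors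
vanishes, then so does a nonnegative integer combination with the same support, because rational
solutions of a rational linear system are dense in its real solutions. Hence for a face `τ` of an
integral cone `σ ⊆ L`, a positive combination of points of `σ` landing in `conv τ` yields an
integer relation `∑ Sᵢ zᵢ = ∑ S'ₖ z'ₖ ∈ τ` with `zᵢ ∈ σ`, `z'ₖ ∈ τ`, so every `zᵢ` lies in `τ`;
this makes `conv τ` a face of `conv σ`. Conversely every face `ν` of `conv σ` is `conv (σ ∩ ν)`,
and `convexHull` commutes with Minkowski sums and differences, which transports both cofan axioms.
-/

open Pointwise

/-- An integral cone: a subset containing `0` and closed under addition. -/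
def IsCone {L : Type*} [AddCommMonoid L] (σ : Set L) : Prop :=
  0 ∈ σ ∧ ∀ a ∈ σ, ∀ b ∈ σ, a + b ∈ σ

/-- A face of a cone `σ`: a nonempty subset `τ ⊆ σ` such that for `a, b ∈ σ`,
`a + b ∈ τ` if and only if `a ∈ τ` and `b ∈ τ`. -/
def IsFace {L : Type*} [AddCommMonoid L] (σ τ : Set L) : Prop :=
  τ.Nonempty ∧ τ ⊆ σ ∧ ∀ a ∈ σ, ∀ b ∈ σ, (a + b ∈ τ ↔ a ∈ τ ∧ b ∈ τ)

/-- A real cone in a real vector space: contains `0`, closed under addition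
and under multiplication by nonnegative scalars. -/
def IsRealCone {V : Type*} [AddCommGroup V] [Module ℝ V] (μ : Set V) : Prop :=
  0 ∈ μ ∧ (∀ a ∈ μ, ∀ b ∈ μ, a + b ∈ μ) ∧ ∀ r : ℝ, 0 ≤ r → ∀ x ∈ μ, r • x ∈ μ

/-- A cofan of integral cones. -/
def IsCofan {L : Type*} [AddCommGroup L] (C : Set (Set L)) : Prop :=
  (∀ σ ∈ C, IsCone σ) ∧
  (∀ σ ∈ C, ∀ τ : Set L, IsFace σ τ → σ - τ ∈ C) ∧
  (∀ σ ∈ C, ∀ σ' ∈ C, ∃ τ : Set L, IsFace σ τ ∧ σ + σ' = σ - τ)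

/-- A cofan of real cones. -/
def IsRealCofan {V : Type*} [AddCommGroup V] [Module ℝ V] (C : Set (Set V)) : Prop :=
  (∀ μ ∈ C, IsRealCone μ) ∧
  (∀ μ ∈ C, ∀ ν : Set V, IsFace μ ν → μ - ν ∈ C) ∧
  (∀ μ ∈ C, ∀ μ' ∈ C, ∃ ν : Set V, IsFace μ ν ∧ μ + μ' = μ - ν)

/-- A fan of real cones. -/
def IsRealFan {V : Type*} [AddCommGroup V] [Module ℝ V] (Δ : Set (Set V)) : Prop :=
  (∀ μ ∈ Δ, IsRealCone μ) ∧
  (∀ μ ∈ Δ, ∀ ν : Set V, IsFace μ ν → ν ∈ Δ) ∧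
  (∀ μ ∈ Δ, ∀ μ' ∈ Δ, IsFace μ (μ ∩ μ') ∧ IsFace μ' (μ ∩ μ'))

/-- A fan of integral cones. -/
def IsIntegralFan {L : Type*} [AddCommMonoid L] (Δ : Set (Set L)) : Prop :=
  (∀ σ ∈ Δ, IsCone σ) ∧
  (∀ σ ∈ Δ, ∀ τ : Set L, IsFace σ τ → τ ∈ Δ) ∧
  (∀ σ ∈ Δ, ∀ σ' ∈ Δ, IsFace σ (σ ∩ σ') ∧ IsFace σ' (σ ∩ σ'))


section IntegralCones

variable {M : Type*} [AddCommMonoid M]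

def IsCone.toAddSubmonoid {σ : Set M} (hσ : IsCone σ) : AddSubmonoid M where
  carrier := σ
  add_mem' ha hb := hσ.2 _ ha _ hb
  zero_mem' := hσ.1

theorem IsCone.inter {σ σ' : Set M} (hσ : IsCone σ) (hσ' : IsCone σ') : IsCone (σ ∩ σ') :=
  ⟨⟨hσ.1, hσ'.1⟩, fun a ha b hb => ⟨hσ.2 a ha.1 b hb.1, hσ'.2 a ha.2 b hb.2⟩⟩

theorem IsFace.zero_mem {σ τ : Set M} (h : IsFace σ τ) (h0 : (0 : M) ∈ σ) : (0 : M) ∈ τ := by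
  obtain ⟨y, hy⟩ := h.1
  exact ((h.2.2 y (h.2.1 hy) 0 h0).mp (by rwa [add_zero])).2

theorem IsFace.isCone {σ τ : Set M} (h : IsFace σ τ) (hσ : IsCone σ) : IsCone τ :=
  ⟨h.zero_mem hσ.1, fun a ha b hb => (h.2.2 a (h.2.1 ha) b (h.2.1 hb)).mpr ⟨ha, hb⟩⟩

theorem IsFace.trans {σ τ ρ : Set M} (hτ : IsFace σ τ) (hρ : IsFace τ ρ) : IsFace σ ρ := by
  refine ⟨hρ.1, hρ.2.1.trans hτ.2.1, fun a ha b hb => ⟨fun hab => ?_, fun h => ?_⟩⟩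
  · obtain ⟨haτ, hbτ⟩ := (hτ.2.2 a ha b hb).mp (hρ.2.1 hab)
    exact (hρ.2.2 a haτ b hbτ).mp hab
  · exact (hρ.2.2 a (hρ.2.1 h.1) b (hρ.2.1 h.2)).mpr h

theorem IsFace.mem_of_sum_mem {σ τ : Set M} (h : IsFace σ τ) (hσ : IsCone σ) {κ : Type*}
    {s : Finset κ} {f : κ → M} (hf : ∀ i ∈ s, f i ∈ σ) (hs : ∑ i ∈ s, f i ∈ τ) :
    ∀ i ∈ s, f i ∈ τ := by
  classical
  induction s using Finset.induction_on with
  | empty => simp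
  | insert a s ha ih =>
    rw [Finset.sum_insert ha] at hs
    have hfs : ∀ i ∈ s, f i ∈ σ := fun i hi => hf i (Finset.mem_insert_of_mem hi)
    obtain ⟨hfa, hsum⟩ := (h.2.2 _ (hf a (Finset.mem_insert_self a s)) _
      (hσ.toAddSubmonoid.sum_mem hfs)).mp hs
    intro i hi
    rcases Finset.mem_insert.mp hi with rfl | hi
    · exact hfa
    · exact ih hfs hsum i hi

theorem IsFace.mem_of_nsmul_mem {σ τ : Set M} (h : IsFace σ τ) (hσ : IsCone σ) {x : M}
    (hx : x ∈ σ) {n : ℕ} (hn : n ≠ 0) (hnx : n • x ∈ τ) : x ∈ τ := by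
  obtain ⟨m, rfl⟩ := Nat.exists_eq_succ_of_ne_zero hn
  rw [succ_nsmul] at hnx
  exact ((h.2.2 _ (hσ.toAddSubmonoid.nsmul_mem hx m) _ hx).mp hnx).2

theorem IsFace.inter_of_subset {μ ν σ : Set M} (h : IsFace μ ν) (hσ : IsCone σ) (hσμ : σ ⊆ μ) :
    IsFace σ (σ ∩ ν) := by
  refine ⟨⟨0, hσ.1, h.zero_mem (hσμ hσ.1)⟩, Set.inter_subset_left, fun a ha b hb => ?_⟩
  simp only [Set.mem_inter_iff, ha, hb, hσ.2 a ha b hb, true_and]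
  exact h.2.2 a (hσμ ha) b (hσμ hb)

theorem IsFace.inter_of_isFace_inter {ρ₁ ρ₂ σ₁ σ₂ : Set M} (h0 : (0 : M) ∈ ρ₁)
    (h₁₂ : IsFace ρ₁ (ρ₁ ∩ ρ₂)) (hσ₁ : IsFace ρ₁ σ₁) (hσ₂ : IsFace ρ₂ σ₂) :
    IsFace σ₁ (σ₁ ∩ σ₂) := by
  have h0₂ : (0 : M) ∈ ρ₂ := (h₁₂.zero_mem h0).2
  refine ⟨⟨0, hσ₁.zero_mem h0, hσ₂.zero_mem h0₂⟩, Set.inter_subset_left, fun a ha b hb => ?_⟩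
  have haρ₁ := hσ₁.2.1 ha
  have hbρ₁ := hσ₁.2.1 hb
  constructor
  · rintro ⟨hab₁, hab₂⟩
    obtain ⟨haρ, hbρ⟩ :=
      (h₁₂.2.2 a haρ₁ b hbρ₁).mp ⟨hσ₁.2.1 hab₁, hσ₂.2.1 hab₂⟩
    obtain ⟨ha₂, hb₂⟩ := (hσ₂.2.2 a haρ.2 b hbρ.2).mp hab₂
    exact ⟨⟨ha, ha₂⟩, hb, hb₂⟩
  · rintro ⟨⟨-, ha₂⟩, -, hb₂⟩
    exact ⟨(hσ₁.2.2 a haρ₁ b hbρ₁).mpr ⟨ha, hb⟩,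
      (hσ₂.2.2 a (hσ₂.2.1 ha₂) b (hσ₂.2.1 hb₂)).mpr ⟨ha₂, hb₂⟩⟩

theorem isIntegralFan_setOf_isFace_inter {Δ : Set (Set M)} {L : Set M} (hL : IsCone L)
    (hΔ : ∀ τ ∈ Δ, IsCone τ) (hΔ_inter : ∀ τ ∈ Δ, ∀ τ' ∈ Δ, IsFace τ (τ ∩ τ')) :
    IsIntegralFan {ρ | ∃ τ ∈ Δ, IsFace (τ ∩ L) ρ} := by
  have hcone (τ) (hτ : τ ∈ Δ) : IsCone (τ ∩ L) := (hΔ τ hτ).inter hL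
  have hinter (τ) (hτ : τ ∈ Δ) (τ') (hτ' : τ' ∈ Δ) : IsFace (τ ∩ L) ((τ ∩ L) ∩ (τ' ∩ L)) := by
    have h := (hΔ_inter τ hτ τ' hτ').inter_of_subset (hcone τ hτ) Set.inter_subset_left
    convert h using 1
    ext x
    simp only [Set.mem_inter_iff]
    tauto
  refine ⟨fun ρ ⟨τ, hτ, hρ⟩ => hρ.isCone (hcone τ hτ),
    fun ρ ⟨τ, hτ, hρ⟩ ρ' hρ' => ⟨τ, hτ, hρ.trans hρ'⟩, ?_⟩
  rintro σ₁ ⟨τ₁, hτ₁, hσ₁⟩ σ₂ ⟨τ₂, hτ₂, hσ₂⟩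
  refine ⟨IsFace.inter_of_isFace_inter (hcone τ₁ hτ₁).1 (hinter τ₁ hτ₁ τ₂ hτ₂) hσ₁ hσ₂, ?_⟩
  rw [Set.inter_comm]
  exact IsFace.inter_of_isFace_inter (hcone τ₂ hτ₂).1 (hinter τ₂ hτ₂ τ₁ hτ₁) hσ₂ hσ₁

end IntegralCones

section RealCones

variable {V : Type*} [AddCommGroup V] [Module ℝ V]

theorem IsRealCone.isCone {μ : Set V} (h : IsRealCone μ) : IsCone μ := ⟨h.1, h.2.1⟩

theorem IsRealCone.convex {μ : Set V} (h : IsRealCone μ) : Convex ℝ μ :=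
  fun x hx y hy a b (ha : 0 ≤ a) (hb : 0 ≤ b) _ => h.2.1 _ (h.2.2 a ha x hx) _ (h.2.2 b hb y hy)

theorem IsCone.natCast_smul_mem {μ : Set V} (h : IsCone μ) {x : V} (hx : x ∈ μ) (n : ℕ) :
    (n : ℝ) • x ∈ μ := by
  rw [Nat.cast_smul_eq_nsmul]
  exact h.toAddSubmonoid.nsmul_mem hx n

theorem IsCone.isRealCone_of_convex {μ : Set V} (h : IsCone μ) (hconv : Convex ℝ μ) :
    IsRealCone μ := by
  refine ⟨h.1, h.2, fun r hr x hx => ?_⟩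
  obtain ⟨n, hn⟩ := exists_nat_gt r
  have hn0 : (0 : ℝ) < n := hr.trans_lt hn
  rw [show r • x = (r / n) • ((n : ℝ) • x) by rw [smul_smul, div_mul_cancel₀ _ hn0.ne']]
  exact hconv.smul_mem_of_zero_mem h.1 (h.natCast_smul_mem hx n)
    ⟨div_nonneg hr hn0.le, (div_le_one hn0).mpr hn.le⟩

theorem IsCone.isRealCone_convexHull {σ : Set V} (h : IsCone σ) :
    IsRealCone (convexHull ℝ σ) := by
  refine IsCone.isRealCone_of_convex ⟨subset_convexHull ℝ σ h.1, fun a ha b hb => ?_⟩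
    (convex_convexHull ℝ σ)
  have hσσ : convexHull ℝ (σ + σ) ⊆ convexHull ℝ σ := convexHull_mono (Set.add_subset_iff.mpr h.2)
  exact hσσ (by rw [convexHull_add]; exact Set.add_mem_add ha hb)

theorem IsFace.isRealCone {μ ν : Set V} (h : IsFace μ ν) (hμ : IsRealCone μ) : IsRealCone ν := by
  have hν := h.isCone hμ.isCone
  refine ⟨hν.1, hν.2, fun r hr x hx => ?_⟩
  obtain ⟨n, hn⟩ := exists_nat_ge r
  have hxμ := h.2.1 hx
  have hsplit : r • x + ((n : ℝ) - r) • x ∈ ν := by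
    rw [← add_smul, add_sub_cancel]
    exact hν.natCast_smul_mem hx n
  exact ((h.2.2 _ (hμ.2.2 r hr x hxμ) _ (hμ.2.2 _ (sub_nonneg.mpr hn) x hxμ)).mp hsplit).1

end RealCones

theorem exists_rat_solution_mem_of_isOpen {κ η : Type*} [Fintype κ] (g : κ → η → ℚ)
    {c : κ → ℝ} (hc : ∀ j, ∑ i, c i * g i j = 0) {U : Set (κ → ℝ)} (hU : IsOpen U)
    (hcU : c ∈ U) :
    ∃ q : κ → ℚ, (∀ j, ∑ i, q i * g i j = 0) ∧ (fun i => (q i : ℝ)) ∈ U := by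
  set E := Submodule.span ℚ (Set.range c)
  have : FiniteDimensional ℚ E := FiniteDimensional.span_of_finite ℚ (Set.finite_range c)
  let B := Module.finBasis ℚ E
  let c' : κ → E := fun i => ⟨c i, Submodule.subset_span (Set.mem_range_self i)⟩
  -- A `ℚ`-linear functional on `E` sends `c` to a rational solution; its values `T` on the basis
  -- `B` may be taken as close to the vectors `B α` themselves as we like.
  let Φ : (Fin (Module.finrank ℚ E) → ℝ) → κ → ℝ := fun T i => ∑ α, B.equivFun (c' i) α * T α
  have hΦ : Continuous Φ := by fun_prop
  have hΦB : Φ (fun α => (B α : ℝ)) = c := by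
    funext i
    have := congrArg Subtype.val (B.sum_equivFun (c' i))
    rw [Submodule.coe_sum] at this
    simpa [Φ, Rat.smul_def] using this
  obtain ⟨T, hT⟩ := (DenseRange.piMap fun _ => Rat.denseRange_cast).exists_mem_open
    (hU.preimage hΦ) ⟨_, hΦB ▸ hcU⟩
  refine ⟨fun i => B.constr ℚ T (c' i), fun j => ?_, ?_⟩
  · have h0 : ∑ i, g i j • c' i = 0 :=
      Subtype.ext (by simpa [c', Rat.smul_def, mul_comm] using hc j)
    simpa [mul_comm] using congrArg (B.constr ℚ T) h0
  · simpa [Φ, mul_comm] using hT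

theorem exists_pos_nat_mul_eq_natCast {κ : Type*} [Fintype κ] {q : κ → ℚ} (hq : ∀ i, 0 ≤ q i) :
    ∃ N : ℕ, 0 < N ∧ ∀ i, ∃ m : ℕ, (m : ℚ) = N * q i := by
  refine ⟨∏ i, (q i).den, Finset.prod_pos fun i _ => (q i).den_pos, fun i => ?_⟩
  obtain ⟨k, hk⟩ := Finset.dvd_prod_of_mem (fun i => (q i).den) (Finset.mem_univ i)
  refine ⟨k * (q i).num.toNat, ?_⟩
  have hnum : ((q i).num.toNat : ℚ) = (q i).num := by
    exact_mod_cast Int.toNat_of_nonneg (Rat.num_nonneg.mpr (hq i))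
  rw [hk, Nat.cast_mul, hnum, ← Rat.mul_den_eq_num]
  push_cast
  ring

theorem exists_nat_sum_smul_eq_zero {V η κ : Type*} [AddCommGroup V] [Module ℝ V]
    (b : Module.Basis η ℝ V) [Fintype κ] {v : κ → V}
    (hv : ∀ i, v i ∈ Submodule.span ℤ (Set.range b)) {c : κ → ℝ} (hc : ∀ i, 0 < c i)
    (hrel : ∑ i, c i • v i = 0) : ∃ S : κ → ℕ, (∀ i, 0 < S i) ∧ ∑ i, S i • v i = 0 := by
  choose g hg using fun i => (b.mem_span_iff_repr_mem ℤ (v i)).mp (hv i)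
  have hcoord (x : κ → ℝ) : ∑ i, x i • v i = 0 ↔ ∀ j, ∑ i, x i * ((g i j : ℚ) : ℝ) = 0 := by
    simp [b.ext_elem_iff, ← hg]
  obtain ⟨q, hq, hqU⟩ := exists_rat_solution_mem_of_isOpen (fun i j => (g i j : ℚ))
    ((hcoord c).mp hrel) (isOpen_set_pi Set.finite_univ fun _ _ => isOpen_Ioi)
    (fun i _ => hc i)
  have hq_pos (i : κ) : 0 < q i := by exact_mod_cast Set.mem_Ioi.mp (Set.mem_univ_pi.mp hqU i)
  obtain ⟨N, hN, hS⟩ := exists_pos_nat_mul_eq_natCast fun i => (hq_pos i).le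
  choose S hS using hS
  refine ⟨S, fun i => ?_, ?_⟩
  · have : (0 : ℚ) < S i := by rw [hS]; exact mul_pos (by exact_mod_cast hN) (hq_pos i)
    exact_mod_cast this
  · simp_rw [← Nat.cast_smul_eq_nsmul ℝ, hcoord]
    intro j
    have : ∑ i, (S i : ℚ) * g i j = 0 := by
      simp_rw [hS, mul_assoc, ← Finset.mul_sum, hq j, mul_zero]
    exact_mod_cast this

section ConvexHull

variable {V η : Type*} [AddCommGroup V] [Module ℝ V] (b : Module.Basis η ℝ V)

theorem IsFace.eq_convexHull_inter {σ ν : Set V} (hν : IsFace (convexHull ℝ σ) ν)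
    (hσ : IsCone σ) : ν = convexHull ℝ (σ ∩ ν) := by
  have hσR := hσ.isRealCone_convexHull
  have hνR := hν.isRealCone hσR
  refine subset_antisymm (fun y hy => ?_) (convexHull_min Set.inter_subset_right hνR.convex)
  obtain ⟨κ, _, z, w, hz, -, hw, hw1, rfl⟩ := eq_pos_convex_span_of_mem_convexHull (hν.2.1 hy)
  have hzσ (i : κ) : z i ∈ σ := hz (Set.mem_range_self i)
  have hterms := hν.mem_of_sum_mem hσR.isCone
    (fun i _ => hσR.2.2 _ (hw i).le _ (subset_convexHull ℝ σ (hzσ i))) hy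
  refine (convex_convexHull ℝ _).sum_mem (fun i _ => (hw i).le) hw1 fun i _ => ?_
  have hzν : z i ∈ ν := by
    simpa [(hw i).ne'] using
      hνR.2.2 (w i)⁻¹ (inv_nonneg.mpr (hw i).le) _ (hterms i (Finset.mem_univ i))
  exact subset_convexHull ℝ _ ⟨hzσ i, hzν⟩

theorem IsFace.mem_of_sum_smul_mem_convexHull {σ τ : Set V} (hτ : IsFace σ τ) (hσ : IsCone σ)
    (hσL : σ ⊆ Submodule.span ℤ (Set.range b)) {κ : Type*} [Fintype κ] {w : κ → ℝ}
    {z : κ → V} (hw : ∀ i, 0 < w i) (hz : ∀ i, z i ∈ σ)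
    (hwz : ∑ i, w i • z i ∈ convexHull ℝ τ) : ∀ i, z i ∈ τ := by
  obtain ⟨κ', _, z', w', hz', -, hw', -, hwz'⟩ := eq_pos_convex_span_of_mem_convexHull hwz
  have hz'τ (k : κ') : z' k ∈ τ := hz' (Set.mem_range_self k)
  obtain ⟨S, hS, hSrel⟩ := exists_nat_sum_smul_eq_zero b (v := Sum.elim z fun k => -z' k)
    (c := Sum.elim w w')
    (Sum.forall.mpr ⟨fun i => hσL (hz i), fun k => neg_mem (hσL (hτ.2.1 (hz'τ k)))⟩)
    (Sum.forall.mpr ⟨hw, hw'⟩)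
    (by simp [Fintype.sum_sum_type, hwz'])
  have hτcone := hτ.isCone hσ
  have hsum : ∑ i, S (.inl i) • z i ∈ τ := by
    simp only [Fintype.sum_sum_type, Sum.elim_inl, Sum.elim_inr, smul_neg,
      Finset.sum_neg_distrib, add_neg_eq_zero] at hSrel
    rw [hSrel]
    exact hτcone.toAddSubmonoid.sum_mem fun k _ => hτcone.toAddSubmonoid.nsmul_mem (hz'τ k) _
  have hterms := hτ.mem_of_sum_mem hσ (fun i _ => hσ.toAddSubmonoid.nsmul_mem (hz i) _) hsum
  exact fun i => hτ.mem_of_nsmul_mem hσ (hz i) (hS _).ne' (hterms i (Finset.mem_univ i))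

theorem IsFace.convexHull_of_subset_span {σ τ : Set V} (hτ : IsFace σ τ) (hσ : IsCone σ)
    (hσL : σ ⊆ Submodule.span ℤ (Set.range b)) :
    IsFace (convexHull ℝ σ) (convexHull ℝ τ) := by
  have hτR := (hτ.isCone hσ).isRealCone_convexHull
  refine ⟨⟨0, hτR.1⟩, convexHull_mono hτ.2.1,
    fun x hx y hy => ⟨fun hxy => ?_, fun h => hτR.2.1 _ h.1 _ h.2⟩⟩
  obtain ⟨κ, _, z, w, hz, -, hw, hw1, rfl⟩ := eq_pos_convex_span_of_mem_convexHull hx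
  obtain ⟨κ', _, z', w', hz', -, hw', hw1', rfl⟩ := eq_pos_convex_span_of_mem_convexHull hy
  have hall := hτ.mem_of_sum_smul_mem_convexHull b hσ hσL (w := Sum.elim w w')
    (z := Sum.elim z z') (Sum.forall.mpr ⟨hw, hw'⟩)
    (Sum.forall.mpr ⟨fun i => hz (Set.mem_range_self i), fun k => hz' (Set.mem_range_self k)⟩)
    (by simpa [Fintype.sum_sum_type] using hxy)
  exact ⟨(convex_convexHull ℝ τ).sum_mem (fun i _ => (hw i).le) hw1
      fun i _ => subset_convexHull ℝ τ (hall (.inl i)),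
    (convex_convexHull ℝ τ).sum_mem (fun k _ => (hw' k).le) hw1'
      fun k _ => subset_convexHull ℝ τ (hall (.inr k))⟩

end ConvexHull

theorem IsCofan.isRealCofan_image_convexHull {V η : Type*} [AddCommGroup V] [Module ℝ V]
    (b : Module.Basis η ℝ V) {C : Set (Set V)}
    (hCL : ∀ σ ∈ C, σ ⊆ Submodule.span ℤ (Set.range b)) (hC : IsCofan C) :
    IsRealCofan (convexHull ℝ '' C) := by
  refine ⟨?_, ?_, ?_⟩
  · rintro _ ⟨σ, hσ, rfl⟩
    exact (hC.1 σ hσ).isRealCone_convexHull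
  · rintro _ ⟨σ, hσ, rfl⟩ ν hν
    refine ⟨σ - σ ∩ ν, hC.2.1 σ hσ _ (hν.inter_of_subset (hC.1 σ hσ) (subset_convexHull ℝ σ)), ?_⟩
    rw [convexHull_sub, ← hν.eq_convexHull_inter (hC.1 σ hσ)]
  · rintro _ ⟨σ, hσ, rfl⟩ _ ⟨σ', hσ', rfl⟩
    obtain ⟨τ, hτ, hsum⟩ := hC.2.2 σ hσ σ' hσ'
    refine ⟨convexHull ℝ τ, hτ.convexHull_of_subset_span b (hC.1 σ hσ) (hCL σ hσ), ?_⟩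
    rw [← convexHull_add, hsum, convexHull_sub]

theorem stmt17_general
    {V : Type*} [AddCommGroup V] [Module ℝ V]
    {ι : Type*} (b : Module.Basis ι ℝ V)
    (Lset : Set V) (hL : Lset = (Submodule.span ℤ (Set.range ⇑b) : Set V)) :
    -- (a)
    (∀ C : Set (Set V), (∀ σ ∈ C, σ ⊆ Lset) → IsCofan C →
      IsRealCofan (Set.image (convexHull ℝ) C)) ∧
    -- (b)
    (∀ Δ : Set (Set V), IsRealFan Δ →
      IsIntegralFan {τ' : Set V | ∃ τ ∈ Δ, IsFace (τ ∩ Lset) τ'} ∧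
      ∀ τ' ∈ {τ' : Set V | ∃ τ ∈ Δ, IsFace (τ ∩ Lset) τ'}, τ' ⊆ Lset) := by
  subst hL
  refine ⟨fun C hCL hC => hC.isRealCofan_image_convexHull b hCL, fun Δ hΔ => ⟨?_, ?_⟩⟩
  · have hL : IsCone (Submodule.span ℤ (Set.range b) : Set V) :=
      ⟨zero_mem _, fun _ ha _ hb => add_mem ha hb⟩
    exact isIntegralFan_setOf_isFace_inter hL (fun τ hτ => (hΔ.1 τ hτ).isCone)
      fun τ hτ τ' hτ' => (hΔ.2.2 τ hτ τ' hτ').1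
  · rintro ρ ⟨τ, -, hρ⟩
    exact hρ.2.1.trans Set.inter_subset_right

/-- (a) the realification of an integral cofan is a real cofan;
(b) the faces of the integral cones `τ ∩ L`, for `τ` in a real fan, form an
integral fan in `L`. -/
theorem stmt17
    {V : Type*} [AddCommGroup V] [Module ℝ V] [FiniteDimensional ℝ V]
    {ι : Type*} [Fintype ι] (b : Module.Basis ι ℝ V)
    (Lset : Set V) (hL : Lset = (Submodule.span ℤ (Set.range ⇑b) : Set V)) :
    -- (a)
    (∀ C : Set (Set V), (∀ σ ∈ C, σ ⊆ Lset) → IsCofan C →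
      IsRealCofan (Set.image (convexHull ℝ) C)) ∧
    -- (b)
    (∀ Δ : Set (Set V), IsRealFan Δ →
      IsIntegralFan {τ' : Set V | ∃ τ ∈ Δ, IsFace (τ ∩ Lset) τ'} ∧
      ∀ τ' ∈ {τ' : Set V | ∃ τ ∈ Δ, IsFace (τ ∩ Lset) τ'}, τ' ⊆ Lset) :=
  stmt17_general b Lset hL
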